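/- arXiv:math/0608004 — 2 statements merged into one kernel-verified Lean document; each statement's English description precedes it below -/
import Mathlib

section
/- If a sequence (A_n) of measurable subsets of a probability space satisfies (i) μ(A_n ∩ A_m) ≤ K·μ(A_n)·μ(A_m) for all m > n, and (ii) ∑ μ(A_n) = ∞, then the measure of the set of points belonging to infinitely many A_n is at least 1/K. -/
open MeasureTheory Filter ENNReal Topology

/-!
For a block `A N, …, A (M - 1)` with `S = ∑ μ (A i)`, Cauchy–Schwarz applied to `∑ 1_{A i}` on
the union of the block gives `S ^ 2 ≤ (∑ i j, μ (A i ∩ A j)) * μ (⋃ A i)`, and the hypothesis on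
pairs bounds the double sum by `S + K * S ^ 2`. Divergence of the series lets `S → ∞`, so every
tail union `⋃ n ≥ N, A n` has measure at least `1 / K`; continuity from above passes this bound
to the limsup.
-/

namespace MeasureTheory

variable {Ω ι : Type*} [MeasurableSpace Ω] {μ : Measure Ω}

theorem sq_setLIntegral_le_setLIntegral_sq_mul {f : Ω → ℝ≥0∞} (hf : AEMeasurable f μ)
    (s : Set Ω) : (∫⁻ x in s, f x ∂μ) ^ 2 ≤ (∫⁻ x in s, f x ^ 2 ∂μ) * μ s := by
  have hCS := ENNReal.lintegral_mul_le_Lp_mul_Lq (μ.restrict s) Real.HolderConjugate.two_two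
    hf.restrict (aemeasurable_const (b := (1 : ℝ≥0∞)))
  simp only [Pi.mul_apply, mul_one, lintegral_const, Measure.restrict_apply_univ, one_pow, one_mul,
    ENNReal.rpow_two] at hCS
  calc (∫⁻ x in s, f x ∂μ) ^ 2
      ≤ ((∫⁻ x in s, f x ^ 2 ∂μ) ^ (1 / 2 : ℝ) * μ s ^ (1 / 2 : ℝ)) ^ (2 : ℝ) := by
        rw [← ENNReal.rpow_two]; exact ENNReal.rpow_le_rpow hCS zero_le_two
    _ = (∫⁻ x in s, f x ^ 2 ∂μ) * μ s := by
        rw [ENNReal.mul_rpow_of_nonneg _ _ zero_le_two, ← ENNReal.rpow_mul, ← ENNReal.rpow_mul]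
        norm_num

theorem lintegral_sq_sum_indicator_one (s : Finset ι) {A : ι → Set Ω}
    (hA : ∀ i, MeasurableSet (A i)) :
    ∫⁻ x, (∑ i ∈ s, (A i).indicator 1 x) ^ 2 ∂μ = ∑ i ∈ s, ∑ j ∈ s, μ (A i ∩ A j) := by
  have h_sq (x : Ω) : (∑ i ∈ s, (A i).indicator 1 x) ^ 2 =
      ∑ i ∈ s, ∑ j ∈ s, (A i ∩ A j).indicator (1 : Ω → ℝ≥0∞) x := by
    simp only [sq, Finset.sum_mul_sum, Set.inter_indicator_one, Pi.mul_apply]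
  have h_meas (i j : ι) : Measurable ((A i ∩ A j).indicator (1 : Ω → ℝ≥0∞)) :=
    measurable_const.indicator ((hA i).inter (hA j))
  simp_rw [h_sq]
  rw [lintegral_finsetSum _ fun i _ => Finset.measurable_sum s fun j _ => h_meas i j]
  refine Finset.sum_congr rfl fun i _ => ?_
  rw [lintegral_finsetSum _ fun j _ => h_meas i j]
  exact Finset.sum_congr rfl fun j _ => lintegral_indicator_one ((hA i).inter (hA j))

/-- The Chung–Erdős inequality. -/
theorem sq_sum_measure_le_sum_measure_inter_mul_measure_biUnion (s : Finset ι)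
    {A : ι → Set Ω} (hA : ∀ i, MeasurableSet (A i)) :
    (∑ i ∈ s, μ (A i)) ^ 2 ≤ (∑ i ∈ s, ∑ j ∈ s, μ (A i ∩ A j)) * μ (⋃ i ∈ s, A i) := by
  set U := ⋃ i ∈ s, A i
  have h_meas (i : ι) : Measurable ((A i).indicator (1 : Ω → ℝ≥0∞)) :=
    measurable_const.indicator (hA i)
  have h_first : ∫⁻ x in U, ∑ i ∈ s, (A i).indicator 1 x ∂μ = ∑ i ∈ s, μ (A i) := by
    rw [lintegral_finsetSum _ fun i _ => h_meas i]
    refine Finset.sum_congr rfl fun i hi => ?_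
    rw [lintegral_indicator_one (hA i), Measure.restrict_apply (hA i),
      Set.inter_eq_left.2 (Finset.subset_set_biUnion_of_mem hi)]
  calc (∑ i ∈ s, μ (A i)) ^ 2
      ≤ (∫⁻ x in U, (∑ i ∈ s, (A i).indicator 1 x) ^ 2 ∂μ) * μ U := by
        rw [← h_first]
        exact sq_setLIntegral_le_setLIntegral_sq_mul
          (Finset.measurable_sum s fun i _ => h_meas i).aemeasurable U
    _ ≤ (∑ i ∈ s, ∑ j ∈ s, μ (A i ∩ A j)) * μ U := by
        rw [← lintegral_sq_sum_indicator_one s hA]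
        exact mul_le_mul_left (setLIntegral_le_lintegral U _) _

theorem sum_sum_measure_inter_le [LinearOrder ι] {A : ι → Set Ω} {K : ℝ≥0∞}
    (h : ∀ m n, n < m → μ (A n ∩ A m) ≤ K * μ (A n) * μ (A m)) (s : Finset ι) :
    ∑ i ∈ s, ∑ j ∈ s, μ (A i ∩ A j) ≤ ∑ i ∈ s, μ (A i) + K * (∑ i ∈ s, μ (A i)) ^ 2 := by
  have h_pair (i j : ι) :
      μ (A i ∩ A j) ≤ (if i = j then μ (A i) else 0) + K * μ (A i) * μ (A j) := by
    rcases lt_trichotomy i j with hij | rfl | hij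
    · simpa [hij.ne] using h j i hij
    · simp
    · simpa [hij.ne', Set.inter_comm, mul_right_comm] using h i j hij
  calc ∑ i ∈ s, ∑ j ∈ s, μ (A i ∩ A j)
      ≤ ∑ i ∈ s, ∑ j ∈ s, ((if i = j then μ (A i) else 0) + K * μ (A i) * μ (A j)) := by
        gcongr with i _ j _
        exact h_pair i j
    _ = ∑ i ∈ s, μ (A i) + K * (∑ i ∈ s, μ (A i)) ^ 2 := by
        simp only [Finset.sum_add_distrib, Finset.sum_ite_eq]
        congr 1
        · exact Finset.sum_congr rfl fun i hi => if_pos hi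
        · simp_rw [sq, Finset.sum_mul_sum, Finset.mul_sum, mul_assoc]

theorem measure_limsup_atTop_eq_iInf [IsFiniteMeasure μ] {A : ℕ → Set Ω}
    (hA : ∀ n, MeasurableSet (A n)) :
    μ (limsup A atTop) = ⨅ N, μ (⋃ n ≥ N, A n) := by
  rw [limsup_eq_iInf_iSup_of_nat]
  simp only [Set.iInf_eq_iInter, Set.iSup_eq_iUnion]
  refine Antitone.measure_iInter (fun N M hNM => ?_) (fun N => ?_) ⟨0, measure_ne_top μ _⟩
  · exact Set.biUnion_mono (fun n hn => le_trans hNM hn) fun _ _ => le_rfl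
  · exact (MeasurableSet.biUnion (Set.to_countable _) fun n _ => hA n).nullMeasurableSet

end MeasureTheory

namespace ENNReal

theorem tendsto_sum_Ico_atTop {f : ℕ → ℝ≥0∞} (hf : ∑' n, f n = ∞) (hf_fin : ∀ n, f n ≠ ∞)
    (N : ℕ) : Tendsto (fun M => ∑ i ∈ Finset.Ico N M, f i) atTop (𝓝 ∞) := by
  have h_tail : ∑' k, f (N + k) = ∞ := by
    induction N with
    | zero => simpa using hf
    | succ N ih => simpa [add_assoc, add_comm 1] using ENNReal.tsum_add_one_eq_top ih (hf_fin N)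
  simp_rw [Finset.sum_Ico_eq_sum_range]
  rw [← h_tail]
  exact (ENNReal.tendsto_nat_tsum _).comp (tendsto_sub_atTop_nat N)

theorem one_le_mul_of_forall_sq_le {K t : ℝ≥0∞} (ht : t ≠ ∞) {S : ℕ → ℝ≥0∞}
    (hS : Tendsto S atTop (𝓝 ∞)) (hS_fin : ∀ M, S M ≠ ∞)
    (h : ∀ M, S M ^ 2 ≤ (S M + K * S M ^ 2) * t) : 1 ≤ K * t := by
  have h_lim : Tendsto (fun M => t * (S M)⁻¹ + K * t) atTop (𝓝 (K * t)) := by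
    have h_inv : Tendsto (fun M => t * (S M)⁻¹) atTop (𝓝 0) := by
      simpa using ENNReal.Tendsto.const_mul hS.inv (Or.inr ht)
    simpa using h_inv.add_const (K * t)
  refine ge_of_tendsto h_lim ?_
  filter_upwards [hS.eventually_ne ENNReal.top_ne_zero] with M hM
  have h_cancel : S M * (S M)⁻¹ = 1 := ENNReal.mul_inv_cancel hM (hS_fin M)
  calc 1 = S M ^ 2 * ((S M)⁻¹ ^ 2) := by rw [← mul_pow, h_cancel, one_pow]
    _ ≤ (S M + K * S M ^ 2) * t * ((S M)⁻¹ ^ 2) := by gcongr; exact h M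
    _ = t * (S M)⁻¹ * (S M * (S M)⁻¹) + K * t * (S M * (S M)⁻¹) ^ 2 := by ring
    _ = t * (S M)⁻¹ + K * t := by rw [h_cancel]; ring

end ENNReal

theorem paley_zygmund_general {Ω : Type*} [MeasurableSpace Ω] (μ : Measure Ω)
    [IsProbabilityMeasure μ] (A : ℕ → Set Ω) (hA : ∀ n, MeasurableSet (A n))
    (K : ℝ≥0∞)
    (h1 : ∀ m n : ℕ, n < m → μ (A n ∩ A m) ≤ K * μ (A n) * μ (A m))
    (h2 : ∑' n, μ (A n) = ∞) :
    1 / K ≤ μ (Filter.limsup A Filter.atTop) := by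
  rw [measure_limsup_atTop_eq_iInf hA]
  refine le_iInf fun N => ENNReal.div_le_of_le_mul' ?_
  set S := fun M => ∑ i ∈ Finset.Ico N M, μ (A i)
  refine ENNReal.one_le_mul_of_forall_sq_le (measure_ne_top μ _)
    (ENNReal.tendsto_sum_Ico_atTop h2 (fun n => measure_ne_top μ _) N)
    (fun M => ENNReal.sum_ne_top.2 fun i _ => measure_ne_top μ _) fun M => ?_
  calc S M ^ 2
      ≤ (∑ i ∈ Finset.Ico N M, ∑ j ∈ Finset.Ico N M, μ (A i ∩ A j)) *
          μ (⋃ i ∈ Finset.Ico N M, A i) :=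
        sq_sum_measure_le_sum_measure_inter_mul_measure_biUnion _ hA
    _ ≤ (S M + K * S M ^ 2) * μ (⋃ n ≥ N, A n) := by
        refine mul_le_mul' (sum_sum_measure_inter_le h1 _) (measure_mono ?_)
        exact Set.iUnion₂_subset fun i hi =>
          Set.subset_iUnion₂ (s := fun n (_ : n ≥ N) => A n) i (Finset.mem_Ico.1 hi).1

/-- Paley–Zygmund / Kochen–Stone type lemma. -/
theorem paley_zygmund {Ω : Type*} [MeasurableSpace Ω] (μ : Measure Ω)
    [IsProbabilityMeasure μ] (A : ℕ → Set Ω) (hA : ∀ n, MeasurableSet (A n))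
    (K : ℝ≥0∞) (hK : 0 < K)
    (h1 : ∀ m n : ℕ, n < m → μ (A n ∩ A m) ≤ K * μ (A n) * μ (A m))
    (h2 : ∑' n, μ (A n) = ∞) :
    1 / K ≤ μ (Filter.limsup A Filter.atTop) :=
  paley_zygmund_general μ A hA K h1 h2
end

section
/- Let 0 < ε ≤ 1 and let (t_n) be an increasing sequence of reals with t_0 > 1 satisfying the recurrence t_{n+1} = t_n + ε·log(t_{n+1}). Then there exists a constant C > 0 such that t_n ≤ C·n·log(n)·log(log(n)) for all sufficiently large n. -/
open Filter Real

theorem recurrence_growth (ε : ℝ) (hε0 : 0 < ε) (hε1 : ε ≤ 1)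
    (t : ℕ → ℝ) (ht : StrictMono t) (ht0 : 1 < t 0)
    (hrec : ∀ n, t (n + 1) = t n + ε * Real.log (t (n + 1))) :
    ∃ C > 0, ∀ᶠ n : ℕ in atTop,
      t n ≤ C * n * Real.log n * Real.log (Real.log n) := by
  have ht1 : ∀ n, 1 < t n := fun n => lt_of_lt_of_le ht0 (ht.monotone (Nat.zero_le n))
  have htpos : ∀ n, 0 < t n := fun n => lt_trans one_pos (ht1 n)
  have hloghalf : ∀ x : ℝ, 0 < x → Real.log x ≤ x / 2 := by
    intro x hx
    have hs : Real.log (Real.sqrt x) ≤ Real.sqrt x - 1 :=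
      Real.log_le_sub_one_of_pos (Real.sqrt_pos.2 hx)
    rw [Real.log_sqrt hx.le] at hs
    have h2 : Real.sqrt x ^ 2 = x := Real.sq_sqrt hx.le
    nlinarith [sq_nonneg (Real.sqrt x - 2)]
  have hdouble : ∀ n, t (n+1) ≤ 2 * t n := by
    intro n
    have h := hrec n
    have h1 := hloghalf (t (n+1)) (htpos _)
    have h2 : ε * Real.log (t (n+1)) ≤ Real.log (t (n+1)) := by
      have hl : 0 ≤ Real.log (t (n+1)) := Real.log_nonneg (ht1 _).le
      nlinarith
    linarith
  have hstep : ∀ n, t (n+1) ≤ t n + Real.log 2 + Real.log (t n) := by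
    intro n
    have h2 : Real.log (t (n+1)) ≤ Real.log 2 + Real.log (t n) := by
      rw [← Real.log_mul two_ne_zero (htpos n).ne']
      exact Real.log_le_log (htpos _) (hdouble n)
    have h := hrec n
    have h3 : ε * Real.log (t (n+1)) ≤ Real.log (t (n+1)) := by
      have hl : 0 ≤ Real.log (t (n+1)) := Real.log_nonneg (ht1 _).le
      nlinarith
    linarith
  set K : ℝ := t 0 + 3 with hK
  have hK4 : 4 ≤ K := by linarith
  have hlogK : ∀ m : ℕ, 1 ≤ Real.log (K * (m + 2)) := by
    intro m
    have h8 : (8:ℝ) ≤ K * (m+2) := by nlinarith [(Nat.cast_nonneg m : (0:ℝ) ≤ m)]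
    have he : Real.exp 1 ≤ K * (m+2) := le_trans (by nlinarith [Real.exp_one_lt_d9]) h8
    rwa [← Real.le_log_iff_exp_le (by linarith)] at he
  have main : ∀ n : ℕ, t n ≤ K * (n + 2) * Real.log (K * (n + 2)) := by
    intro n
    induction n with
    | zero =>
      have h1 := hlogK 0
      simp only [Nat.cast_zero] at h1 ⊢
      nlinarith
    | succ n ih =>
      have hL1 := hlogK n
      have hKn : (0:ℝ) < K * ((n:ℝ) + 2) := by nlinarith [(Nat.cast_nonneg n : (0:ℝ) ≤ n)]
      set L := Real.log (K * ((n:ℝ) + 2)) with hLdef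
      have hlogtn : Real.log (t n) ≤ L + Real.log L := by
        have h1 : t n ≤ K * ((n:ℝ)+2) * L := ih
        have h2 : Real.log (t n) ≤ Real.log (K * ((n:ℝ)+2) * L) :=
          Real.log_le_log (htpos n) h1
        rwa [Real.log_mul hKn.ne' (by linarith)] at h2
      have hlogL : Real.log L ≤ L - 1 := Real.log_le_sub_one_of_pos (by linarith)
      have hlog2 : Real.log 2 ≤ 1 := by
        nlinarith [Real.log_two_lt_d9]
      have h := hstep n
      have hLL' : L ≤ Real.log (K * ((n:ℝ) + 1 + 2)) := by
        apply Real.log_le_log hKn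
        nlinarith [(Nat.cast_nonneg n : (0:ℝ) ≤ n)]
      have key : t (n+1) ≤ K * ((n:ℝ) + 3) * L := by nlinarith
      have : t (n+1) ≤ K * ((n:ℝ) + 1 + 2) * Real.log (K * ((n:ℝ) + 1 + 2)) := by
        nlinarith [(Nat.cast_nonneg n : (0:ℝ) ≤ n)]
      convert this using 3 <;> push_cast <;> ring
  refine ⟨4 * K, by linarith, ?_⟩
  have hlogtend : Tendsto (fun n : ℕ => Real.log n) atTop atTop :=
    Real.tendsto_log_atTop.comp tendsto_natCast_atTop_atTop
  have h1 : ∀ᶠ n : ℕ in atTop, Real.log (2*K) ≤ Real.log n :=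
    hlogtend.eventually_ge_atTop _
  have h2 : ∀ᶠ n : ℕ in atTop, 1 ≤ Real.log (Real.log n) :=
    (Real.tendsto_log_atTop.comp hlogtend).eventually_ge_atTop 1
  have h3 : ∀ᶠ n : ℕ in atTop, 2 ≤ n := eventually_ge_atTop 2
  filter_upwards [h1, h2, h3] with n hn1 hn2 hn3
  have hn2' : (2:ℝ) ≤ n := by exact_mod_cast hn3
  have hlogn0 : 0 < Real.log n := by
    have : (0:ℝ) < Real.log (2*K) := Real.log_pos (by linarith)
    linarith
  have hb1 : K * ((n:ℝ)+2) ≤ 2*K*n := by nlinarith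
  have hb2 : Real.log (K * ((n:ℝ)+2)) ≤ 2 * Real.log n := by
    have h := Real.log_le_log (by positivity : (0:ℝ) < K * ((n:ℝ)+2)) hb1
    have h2' : Real.log (2*K*(n:ℝ)) = Real.log (2*K) + Real.log n :=
      Real.log_mul (by positivity) (by positivity)
    linarith
  have hmain := main n
  have hLpos := hlogK n
  have hfin : t n ≤ 4 * K * n * Real.log n := by nlinarith
  nlinarith [mul_pos (mul_pos (by linarith : (0:ℝ) < 4*K) (by linarith : (0:ℝ) < (n:ℝ))) hlogn0]
end
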